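/- Let y ∈ ℝ^{n+1} have its centered fractional parts sorted in descending order: {y_1} ≥ {y_2} ≥ … ≥ {y_{n+1}}. For i = 0, 1, …, n define u_i = ⌊y⌉ + Σ_{j=1}^{i} e_j (where e_j is the j-th standard basis vector), z_i = y − u_i, and d_i = ‖z_i‖² − (Σ_j (z_i)_j)²/(n+1). If m ∈ {0, 1, …, n} satisfies d_m ≤ d_i for all i ∈ {0, 1, …, n}, then Q u_m is a closest point in A_n* to y. (Correctness of the proposed nearest-point algorithm for A_n*.) -/

import Mathlib

/-- The orthogonal projection onto the hyperplane orthogonal to the all-ones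
vector: `(Q x) i = x i - (∑ j, x j) / (n+1)`. -/
noncomputable def Q {n : ℕ} (x : EuclideanSpace ℝ (Fin (n+1))) :
    EuclideanSpace ℝ (Fin (n+1)) :=
  WithLp.toLp 2 (fun i => x i - (∑ j, x j) / (n+1))

/-- Componentwise nearest-integer rounding of a vector (viewed in `ℝ^{n+1}`). -/
noncomputable def roundVec {n : ℕ} (y : EuclideanSpace ℝ (Fin (n+1))) :
    EuclideanSpace ℝ (Fin (n+1)) :=
  WithLp.toLp 2 (fun i => (round (y i) : ℝ))

/-- The centered fractional part `{t} = t - ⌊t⌉ ∈ [-1/2, 1/2)`. -/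
noncomputable def fract (t : ℝ) : ℝ := t - round t

/-- `∑_{j=1}^{m} e_j`: the sum of the first `m` standard basis vectors of `ℝ^{n+1}`. -/
noncomputable def basisSum (n : ℕ) (m : ℕ) : EuclideanSpace ℝ (Fin (n+1)) :=
  ∑ i ∈ Finset.univ.filter (fun i : Fin (n+1) => (i : ℕ) < m),
    EuclideanSpace.single i (1 : ℝ)

/-- `u_m = ⌊y⌉ + ∑_{j=1}^{m} e_j`. -/
noncomputable def u {n : ℕ} (y : EuclideanSpace ℝ (Fin (n+1))) (m : ℕ) :
    EuclideanSpace ℝ (Fin (n+1)) :=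
  roundVec y + basisSum n m

/-- `d_m = ‖z_m‖² − (∑_j (z_m)_j)²/(n+1)` where `z_m = y - u_m`. -/
noncomputable def d {n : ℕ} (y : EuclideanSpace ℝ (Fin (n+1))) (m : ℕ) : ℝ :=
  ‖y - u y m‖ ^ 2 - (∑ j, (y - u y m) j) ^ 2 / (n+1)

/-- The lattice `A_n*`: the image under `Q` of the integer vectors in `ℝ^{n+1}`. -/
noncomputable def Anstar (n : ℕ) : Set (EuclideanSpace ℝ (Fin (n+1))) :=
  { x | ∃ k : Fin (n+1) → ℤ, x = Q (WithLp.toLp 2 (fun i => (k i : ℝ))) }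

/-!
For integral `k`, `y - Q k` splits orthogonally as `Q (y - k)` plus the mean of `y` times `1`,
so it suffices to minimise `‖Q (y - k)‖² = min_t ∑ᵢ (yᵢ - t - kᵢ)²` over integral `k`. For a
fixed `t` the best `k` is `⌊y - t⌉`, and since the fractional parts of `y` are sorted,
`⌊y - t⌉` differs from one of `u_0, …, u_n` by a constant integer vector, which `Q` annihilates.
So the minimum is attained at some `u_M`, and `‖Q (y - u_M)‖² = d_M ≥ d_m`.
-/

open Finset

lemma fract_mem_Ico (t : ℝ) : fract t ∈ Set.Ico (-(1 / 2)) (1 / 2) := by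
  have h₁ := Int.floor_le (t + 1 / 2)
  have h₂ := Int.lt_floor_add_one (t + 1 / 2)
  rw [fract, round_eq]
  constructor <;> linarith

lemma round_sub_eq (x s : ℝ) :
    round (x - s) = round x - ⌊s⌋ - if Int.fract s - 1 / 2 ≤ fract x then 0 else 1 := by
  obtain ⟨h₁, h₂⟩ := fract_mem_Ico x
  have hs₀ := Int.fract_nonneg s
  have hs₁ := Int.fract_lt_one s
  have hx : x - s = (fract x - Int.fract s) + ((round x - ⌊s⌋ : ℤ) : ℝ) := by
    rw [fract, Int.fract]; push_cast; ring
  rw [hx, round_add_intCast, round_eq, add_comm]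
  congr 1
  split_ifs with h
  · rw [neg_zero, Int.floor_eq_zero_iff]; constructor <;> linarith
  · rw [Int.floor_eq_iff]; push_cast; constructor <;> linarith

lemma Fin.mem_iff_lt_card_of_isLowerSet {N : ℕ} {S : Finset (Fin N)}
    (hS : IsLowerSet (S : Set (Fin N))) (i : Fin N) : i ∈ S ↔ (i : ℕ) < #S := by
  constructor
  · intro hi
    have : Iic i ⊆ S := fun j hj => hS (mem_Iic.1 hj) hi
    have := card_le_card this
    rw [Fin.card_Iic] at this
    omega
  · intro hlt
    by_contra hi
    have : S ⊆ Iio i := fun j hj => mem_Iio.2 <| lt_of_not_ge fun hij => hi (hS hij hj)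
    have := card_le_card this
    rw [Fin.card_Iio] at this
    omega

section

variable {n : ℕ}

@[simp]
lemma Q_apply (x : EuclideanSpace ℝ (Fin (n+1))) (i : Fin (n+1)) :
    Q x i = x i - (∑ j, x j) / (n + 1) := rfl

lemma sum_sub_sq_eq (z : EuclideanSpace ℝ (Fin (n+1))) (t : ℝ) :
    ∑ i, (z i - t) ^ 2 = ‖Q z‖ ^ 2 + (n + 1) * ((∑ j, z j) / (n + 1) - t) ^ 2 := by
  set μ := (∑ j, z j) / (n + 1)
  have hμ : ∑ i, (z i - μ) = 0 := by
    simp only [μ, sum_sub_distrib, sum_const, card_univ, Fintype.card_fin, nsmul_eq_mul]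
    push_cast
    field_simp
    ring
  calc ∑ i, (z i - t) ^ 2 = ∑ i, ((z i - μ) ^ 2 + 2 * (μ - t) * (z i - μ) + (μ - t) ^ 2) :=
        sum_congr rfl fun i _ => by ring
    _ = ‖Q z‖ ^ 2 + (n + 1) * (μ - t) ^ 2 := by
        rw [EuclideanSpace.real_norm_sq_eq]
        simp only [sum_add_distrib, ← mul_sum, hμ, Q_apply, sum_const, card_univ,
          Fintype.card_fin, nsmul_eq_mul]
        push_cast
        ring

lemma norm_Q_sq_le_sum_sub_sq (z : EuclideanSpace ℝ (Fin (n+1))) (t : ℝ) :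
    ‖Q z‖ ^ 2 ≤ ∑ i, (z i - t) ^ 2 := by
  rw [sum_sub_sq_eq]
  have := sq_nonneg ((∑ j, z j) / (n + 1) - t)
  nlinarith

lemma norm_Q_sq (z : EuclideanSpace ℝ (Fin (n+1))) :
    ‖Q z‖ ^ 2 = ‖z‖ ^ 2 - (∑ j, z j) ^ 2 / (n + 1) := by
  have h := sum_sub_sq_eq z 0
  simp only [sub_zero] at h
  rw [EuclideanSpace.real_norm_sq_eq z, h]
  field_simp
  ring

lemma norm_sub_Q_sq (y v : EuclideanSpace ℝ (Fin (n+1))) :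
    ‖y - Q v‖ ^ 2 = ‖Q (y - v)‖ ^ 2 + (n + 1) * ((∑ j, y j) / (n + 1)) ^ 2 := by
  calc ‖y - Q v‖ ^ 2 = ∑ i, ((y - v) i - -((∑ j, v j) / (n + 1))) ^ 2 := by
        rw [EuclideanSpace.real_norm_sq_eq]
        congr with i
        simp only [PiLp.sub_apply, Q_apply]
        ring
    _ = _ := by
        rw [sum_sub_sq_eq]
        simp only [PiLp.sub_apply, sum_sub_distrib]
        ring

lemma Q_eq_of_forall_eq_add {a b : EuclideanSpace ℝ (Fin (n+1))} {c : ℝ}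
    (h : ∀ i, a i = b i + c) : Q a = Q b := by
  ext i
  simp only [Q_apply, h, sum_add_distrib, sum_const, card_univ, Fintype.card_fin, nsmul_eq_mul]
  push_cast
  field_simp
  ring

@[simp]
lemma basisSum_apply (m : ℕ) (i : Fin (n+1)) :
    basisSum n m i = if (i : ℕ) < m then 1 else 0 := by
  simp [basisSum]

@[simp]
lemma u_apply (y : EuclideanSpace ℝ (Fin (n+1))) (m : ℕ) (i : Fin (n+1)) :
    u y m i = round (y i) + if (i : ℕ) < m then 1 else 0 := by
  simp [u, roundVec]

lemma Q_u_mem_Anstar (y : EuclideanSpace ℝ (Fin (n+1))) (m : ℕ) : Q (u y m) ∈ Anstar n :=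
  ⟨fun i => round (y i) + if (i : ℕ) < m then 1 else 0, by congr 1; ext i; simp⟩

lemma d_eq_norm_Q_sq (y : EuclideanSpace ℝ (Fin (n+1))) (m : ℕ) :
    d y m = ‖Q (y - u y m)‖ ^ 2 :=
  (norm_Q_sq _).symm

lemma exists_norm_Q_sub_round_le (y : EuclideanSpace ℝ (Fin (n+1))) (k : Fin (n+1) → ℤ) :
    ∃ t : ℝ, ‖Q (y - WithLp.toLp 2 (fun i => (round (y i - t) : ℝ)))‖ ^ 2 ≤
      ‖Q (y - WithLp.toLp 2 (fun i => (k i : ℝ)))‖ ^ 2 := by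
  set z := y - WithLp.toLp 2 (fun i => (k i : ℝ))
  set t := (∑ j, z j) / (n + 1)
  refine ⟨t, ?_⟩
  calc _ ≤ ∑ i, ((y i - t) - round (y i - t)) ^ 2 := by
        convert norm_Q_sq_le_sum_sub_sq _ t using 2 with i
        simp only [PiLp.sub_apply]
        ring
    _ ≤ ∑ i, ((y i - t) - k i) ^ 2 :=
        sum_le_sum fun i _ => sq_le_sq.2 (round_le _ _)
    _ = ‖Q z‖ ^ 2 := by
        rw [EuclideanSpace.real_norm_sq_eq]
        congr with i
        simp only [z, t, Q_apply, PiLp.sub_apply]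
        ring

lemma exists_u_eq_round_sub_add {y : EuclideanSpace ℝ (Fin (n+1))}
    (hsort : ∀ i j : Fin (n+1), i ≤ j → fract (y j) ≤ fract (y i)) (t : ℝ) :
    ∃ M ≤ n, ∃ c : ℤ, ∀ i, u y M i = round (y i - t) + c := by
  set S := univ.filter fun i : Fin (n+1) => Int.fract t - 1 / 2 ≤ fract (y i)
  have hS : IsLowerSet (S : Set (Fin (n+1))) := fun i j hji hi => by
    simp only [S, coe_filter, mem_univ, true_and] at hi ⊢
    exact hi.trans (hsort j i hji)
  have hround (i : Fin (n+1)) :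
      round (y i - t) = round (y i) - ⌊t⌋ - if i ∈ S then 0 else 1 := by
    simp [S, round_sub_eq]
  rcases (card_le_univ S).lt_or_eq with hlt | heq
  · refine ⟨#S, by simpa using hlt, ⌊t⌋ + 1, fun i => ?_⟩
    simp only [u_apply, hround, Fin.mem_iff_lt_card_of_isLowerSet hS]
    split_ifs <;> push_cast <;> ring
  -- `#S = n + 1` is not an admissible index, but then `⌊y - t⌉ = u_0 - ⌊t⌋`.
  · refine ⟨0, Nat.zero_le n, ⌊t⌋, fun i => ?_⟩
    simp [hround, eq_univ_of_card S heq]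

end

theorem algorithm_correct_general (n : ℕ) (y : EuclideanSpace ℝ (Fin (n+1)))
    (hsort : ∀ i j : Fin (n+1), i ≤ j → fract (y j) ≤ fract (y i))
    (m : ℕ) (hmin : ∀ i ≤ n, d y m ≤ d y i) :
    Q (u y m) ∈ Anstar n ∧ ∀ w ∈ Anstar n, ‖y - Q (u y m)‖ ≤ ‖y - w‖ := by
  refine ⟨Q_u_mem_Anstar y m, ?_⟩
  rintro w ⟨k, rfl⟩
  obtain ⟨t, ht⟩ := exists_norm_Q_sub_round_le y k
  obtain ⟨M, hM, c, hc⟩ := exists_u_eq_round_sub_add hsort t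
  have hQ : ‖Q (y - u y m)‖ ^ 2 ≤ ‖Q (y - WithLp.toLp 2 (fun i => (k i : ℝ)))‖ ^ 2 :=
    calc ‖Q (y - u y m)‖ ^ 2 = d y m := (d_eq_norm_Q_sq y m).symm
      _ ≤ d y M := hmin M hM
      _ = ‖Q (y - WithLp.toLp 2 (fun i => (round (y i - t) : ℝ)))‖ ^ 2 := by
          rw [d_eq_norm_Q_sq, Q_eq_of_forall_eq_add (c := -c) fun i => ?_]
          simp only [PiLp.sub_apply, hc]
          ring
      _ ≤ _ := ht
  rw [← pow_le_pow_iff_left₀ (norm_nonneg _) (norm_nonneg _) two_ne_zero,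
    norm_sub_Q_sq, norm_sub_Q_sq]
  linarith

/-- Correctness of the nearest-point algorithm for `A_n*`: if the centered
fractional parts of `y` are sorted in descending order and `m ∈ {0,…,n}`
minimizes `d_i` over `i ∈ {0,…,n}`, then `Q u_m` is a closest point in
`A_n*` to `y`. -/
theorem algorithm_correct (n : ℕ) (y : EuclideanSpace ℝ (Fin (n+1)))
    (hsort : ∀ i j : Fin (n+1), i ≤ j → fract (y j) ≤ fract (y i))
    (m : ℕ) (hm : m ≤ n) (hmin : ∀ i ≤ n, d y m ≤ d y i) :
    Q (u y m) ∈ Anstar n ∧ ∀ w ∈ Anstar n, ‖y - Q (u y m)‖ ≤ ‖y - w‖ :=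
  algorithm_correct_general n y hsort m hmin
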